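/- arXiv:2209.13318 — 3 statements merged into one kernel-verified Lean document; each statement's English description precedes it below -/
import Mathlib

section
/- The set of solution supervisors is closed under arbitrary union: if every supervisor S_j in a family satisfies L_a(S_j^a/G) = K, then the pointwise union ∪S_j also satisfies L_a((∪S_j)^a/G) = K. -/
/-- The large language `L_a(S^a/G)` of the supervised system under cyber attacks,
with enabling condition `σ ∈ Euc ∪ Eca ∨ ∃ t ∈ Φ s, σ ∈ S t`. -/
inductive LargeLang {α : Type*} (LG : Set (List α)) (Euc Eca : Set α)
    (Φ : List α → Set (List α)) (S : List α → Set α) : List α → Prop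
  | nil : LargeLang LG Euc Eca Φ S []
  | snoc (s : List α) (σ : α) :
      LargeLang LG Euc Eca Φ S s → s ++ [σ] ∈ LG →
      (σ ∈ Euc ∪ Eca ∨ ∃ t ∈ Φ s, σ ∈ S t) →
      LargeLang LG Euc Eca Φ S (s ++ [σ])

namespace LargeLang

variable {α ι : Type*} {LG : Set (List α)} {Euc Eca : Set α} {Φ : List α → Set (List α)}

theorem mono {S S' : List α → Set α} (hS : ∀ t, S t ⊆ S' t) {s : List α}
    (h : LargeLang LG Euc Eca Φ S s) : LargeLang LG Euc Eca Φ S' s := by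
  induction h with
  | nil => exact .nil
  | snoc s σ _ hmem hen ih =>
    exact .snoc s σ ih hmem (hen.imp_right fun ⟨t, ht, hσ⟩ => ⟨t, ht, hS t hσ⟩)

/-- Each event the union enables after `s` is already enabled by a single `S j`, and `s` lies in
the language of every `S j`, so the extension stays in the common language. -/
theorem mem_of_iUnion [Nonempty ι] {S : ι → List α → Set α} {M : Set (List α)}
    (hS : ∀ j, {s | LargeLang LG Euc Eca Φ (S j) s} = M) {s : List α}
    (h : LargeLang LG Euc Eca Φ (fun t => ⋃ i, S i t) s) : s ∈ M := by
  induction h with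
  | nil =>
    rw [← hS (Classical.arbitrary ι)]
    exact .nil
  | snoc s σ _ hmem hen ih =>
    obtain ⟨j, hen_j⟩ : ∃ j, σ ∈ Euc ∪ Eca ∨ ∃ t ∈ Φ s, σ ∈ S j t := by
      rcases hen with hσ | ⟨t, ht, hσ⟩
      · exact ⟨Classical.arbitrary ι, .inl hσ⟩
      · obtain ⟨j, hσj⟩ := Set.mem_iUnion.1 hσ
        exact ⟨j, .inr ⟨t, ht, hσj⟩⟩
    rw [← hS j] at ih ⊢
    exact .snoc s σ ih hmem hen_j

end LargeLang

theorem stmt_13_general {α ι : Type*} [Nonempty ι] (LG K : Set (List α)) (Euc Eca : Set α)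
    (Φ : List α → Set (List α)) (S : ι → List α → Set α)
    (hsol : ∀ j, {s : List α | LargeLang LG Euc Eca Φ (S j) s} = K) :
    {s : List α | LargeLang LG Euc Eca Φ (fun t => ⋃ i, S i t) s} = K := by
  obtain ⟨j⟩ := ‹Nonempty ι›
  refine Set.Subset.antisymm (fun _ => LargeLang.mem_of_iUnion hsol) ?_
  rw [← hsol j]
  exact fun _ => LargeLang.mono fun t => Set.subset_iUnion (fun i => S i t) j

/-- The set of solution supervisors is closed under arbitrary union. -/
theorem stmt_13 {α ι : Type*} [Nonempty ι] (LG K : Set (List α)) (Euc Eca : Set α)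
    (Φ : List α → Set (List α)) (S : ι → List α → Set α)
    (hKL : K ⊆ LG) (hKne : K.Nonempty)
    (hK : ∀ s ∈ K, ∀ s' : List α, s' <+: s → s' ∈ K)
    (hLG : ∀ s ∈ LG, ∀ s' : List α, s' <+: s → s' ∈ LG)
    (hsol : ∀ j, {s : List α | LargeLang LG Euc Eca Φ (S j) s} = K) :
    {s : List α | LargeLang LG Euc Eca Φ (fun t => ⋃ i, S i t) s} = K :=
  stmt_13_general LG K Euc Eca Φ S hsol
end

section
/- Necessity of CA-observability: if K is CA-controllable and there exists a supervisor S with L_a(S^a/G) = K, then K is CA-observable with respect to Φ^π. -/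
theorem LargeLang.snoc_iff {α : Type*} {LG : Set (List α)} {Euc Eca : Set α}
    {Φ : List α → Set (List α)} {S : List α → Set α} {s : List α} {σ : α} :
    LargeLang LG Euc Eca Φ S (s ++ [σ]) ↔
      LargeLang LG Euc Eca Φ S s ∧ s ++ [σ] ∈ LG ∧ (σ ∈ Euc ∪ Eca ∨ ∃ t ∈ Φ s, σ ∈ S t) := by
  refine ⟨fun h => ?_, fun ⟨hs, hLG, hσ⟩ => .snoc s σ hs hLG hσ⟩
  generalize hu : s ++ [σ] = u at h
  cases h with
  | nil => simp at hu
  | snoc s' σ' hs' hLG' hσ' =>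
    obtain ⟨rfl, hσσ'⟩ := List.append_inj' hu rfl
    obtain rfl := List.singleton_inj.1 hσσ'
    exact ⟨hs', hLG', hσ'⟩

theorem stmt_16_general {α : Type*} (LG K : Set (List α)) (Euc Eca : Set α)
    (Φ : List α → Set (List α))
    (hKL : K ⊆ LG)
    (hΦne : ∀ s ∈ LG, (Φ s).Nonempty)
    (hctrl : ∀ s ∈ K, ∀ σ ∈ Euc ∪ Eca, s ++ [σ] ∈ LG → s ++ [σ] ∈ K)
    (hsol : ∃ S : List α → Set α,
      {s : List α | LargeLang LG Euc Eca Φ S s} = K) :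
    ∀ s : List α, ∀ σ : α, s ++ [σ] ∈ K →
      ∃ t ∈ Φ s, ∀ s' : List α, t ∈ Φ s' →
        s' ∈ K → s' ++ [σ] ∈ LG → s' ++ [σ] ∈ K := by
  obtain ⟨S, rfl⟩ := hsol
  intro s σ hsσ
  obtain ⟨hs, -, hσ | ⟨t, ht, hσt⟩⟩ := LargeLang.snoc_iff.1 hsσ
  · -- an uncontrollable or attackable event: any observation of `s` works, by CA-controllability
    obtain ⟨t, ht⟩ := hΦne s (hKL hs)
    exact ⟨t, ht, fun s' _ hs' hs'σ => hctrl s' hs' σ hσ hs'σ⟩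
  · -- `S t` enables `σ` after every string `s'` that may also be observed as `t`
    exact ⟨t, ht, fun s' ht' hs' hs'σ => .snoc s' σ hs' hs'σ (.inr ⟨t, ht', hσt⟩)⟩

/-- Necessity of CA-observability: if `K` is CA-controllable and some
supervisor achieves `L_a(S^a/G) = K`, then `K` is CA-observable w.r.t. `Φ^π`. -/
theorem stmt_16 {α : Type*} (LG K : Set (List α)) (Euc Eca : Set α)
    (Φ : List α → Set (List α))
    (hKL : K ⊆ LG) (hKne : K.Nonempty)
    (hK : ∀ s ∈ K, ∀ s' : List α, s' <+: s → s' ∈ K)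
    (hLG : ∀ s ∈ LG, ∀ s' : List α, s' <+: s → s' ∈ LG)
    (hΦne : ∀ s ∈ LG, (Φ s).Nonempty)
    (hctrl : ∀ s ∈ K, ∀ σ ∈ Euc ∪ Eca, s ++ [σ] ∈ LG → s ++ [σ] ∈ K)
    (hsol : ∃ S : List α → Set α,
      {s : List α | LargeLang LG Euc Eca Φ S s} = K) :
    ∀ s : List α, ∀ σ : α, s ++ [σ] ∈ K →
      ∃ t ∈ Φ s, ∀ s' : List α, t ∈ Φ s' →
        s' ∈ K → s' ++ [σ] ∈ LG → s' ++ [σ] ∈ K :=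
  stmt_16_general LG K Euc Eca Φ hKL hΦne hctrl hsol
end

section
/- Sufficiency: if K ⊆ L(G) is nonempty, prefix-closed, CA-controllable, and CA-observable with respect to Φ^π, then the state-estimate-based supervisor S_CA defined by S_CA(t) = (Σ \ η(t)) ∪ Σ_uc for t ∈ Φ^π(K) (where η(t) = {σ : ∃ s' ∈ K, t ∈ Φ^π(s'), s'σ ∈ L(G) \ K}) and S_CA(t) = Σ_uc otherwise, satisfies L_a(S_CA^a/G) = K. -/
namespace LargeLang

variable {α : Type*} {LG K : Set (List α)} {Euc Eca : Set α} {Φ : List α → Set (List α)}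
  {S : List α → Set α}

theorem subset_of_forall_enabled (hnil : [] ∈ K)
    (hctrl : ∀ s ∈ K, ∀ σ ∈ Euc ∪ Eca, s ++ [σ] ∈ LG → s ++ [σ] ∈ K)
    (hS : ∀ s ∈ K, ∀ t ∈ Φ s, ∀ σ ∈ S t, s ++ [σ] ∈ LG → s ++ [σ] ∈ K) :
    {s | LargeLang LG Euc Eca Φ S s} ⊆ K := by
  intro s hs
  induction hs with
  | nil => exact hnil
  | snoc s σ _ hmem henabled ih =>
    rcases henabled with hσ | ⟨t, ht, hσ⟩
    · exact hctrl s ih σ hσ hmem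
    · exact hS s ih t ht σ hσ hmem

theorem superset_of_forall_enabled (hKL : K ⊆ LG)
    (hK : ∀ s ∈ K, ∀ s' : List α, s' <+: s → s' ∈ K)
    (hS : ∀ s σ, s ++ [σ] ∈ K → ∃ t ∈ Φ s, σ ∈ S t) :
    K ⊆ {s | LargeLang LG Euc Eca Φ S s} := by
  intro s hs
  induction s using List.reverseRecOn with
  | nil => exact LargeLang.nil
  | append_singleton s σ ih =>
    obtain ⟨t, ht, hσ⟩ := hS s σ hs
    exact .snoc s σ (ih (hK _ hs s ⟨[σ], rfl⟩)) (hKL hs) (.inr ⟨t, ht, hσ⟩)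

end LargeLang

section CASupervisor

variable {α : Type*} (LG K : Set (List α)) (Euc : Set α) (Φ : List α → Set (List α))

def illegalEvents (t : List α) : Set α :=
  {σ | ∃ s' ∈ K, t ∈ Φ s' ∧ s' ++ [σ] ∈ LG ∧ s' ++ [σ] ∉ K}

open Classical in
noncomputable def caSupervisor (t : List α) : Set α :=
  if t ∈ ⋃ s ∈ K, Φ s then (illegalEvents LG K Φ t)ᶜ ∪ Euc else Euc

variable {LG K Euc Φ}

theorem caSupervisor_safe (huc : ∀ s ∈ K, ∀ σ ∈ Euc, s ++ [σ] ∈ LG → s ++ [σ] ∈ K) :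
    ∀ s ∈ K, ∀ t ∈ Φ s, ∀ σ ∈ caSupervisor LG K Euc Φ t, s ++ [σ] ∈ LG → s ++ [σ] ∈ K := by
  intro s hs t ht σ hσ hmem
  rw [caSupervisor, if_pos (Set.mem_biUnion hs ht)] at hσ
  rcases hσ with hlegal | hσ
  · by_contra hnotK
    exact hlegal ⟨s, hs, ht, hmem, hnotK⟩
  · exact huc s hs σ hσ hmem

theorem caSupervisor_enables
    (hK : ∀ s ∈ K, ∀ s' : List α, s' <+: s → s' ∈ K)
    (hobs : ∀ s : List α, ∀ σ : α, s ++ [σ] ∈ K →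
      ∃ t ∈ Φ s, ∀ s' : List α, t ∈ Φ s' →
        s' ∈ K → s' ++ [σ] ∈ LG → s' ++ [σ] ∈ K) :
    ∀ s σ, s ++ [σ] ∈ K → ∃ t ∈ Φ s, σ ∈ caSupervisor LG K Euc Φ t := by
  intro s σ h
  obtain ⟨t, ht, hkeep⟩ := hobs s σ h
  refine ⟨t, ht, ?_⟩
  rw [caSupervisor, if_pos (Set.mem_biUnion (hK _ h s ⟨[σ], rfl⟩) ht)]
  left
  rintro ⟨s', hs', ht', hmem, hnotK⟩
  exact hnotK (hkeep s' ht' hs' hmem)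

end CASupervisor

open Classical in
theorem stmt_17_general {α : Type*} (LG K : Set (List α)) (Euc Eca : Set α)
    (Φ : List α → Set (List α))
    (hKL : K ⊆ LG) (hKne : K.Nonempty)
    (hK : ∀ s ∈ K, ∀ s' : List α, s' <+: s → s' ∈ K)
    (hctrl : ∀ s ∈ K, ∀ σ ∈ Euc ∪ Eca, s ++ [σ] ∈ LG → s ++ [σ] ∈ K)
    (hobs : ∀ s : List α, ∀ σ : α, s ++ [σ] ∈ K →
      ∃ t ∈ Φ s, ∀ s' : List α, t ∈ Φ s' →
        s' ∈ K → s' ++ [σ] ∈ LG → s' ++ [σ] ∈ K)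
    (η : List α → Set α)
    (hη : ∀ t : List α,
      η t = {σ : α | ∃ s' ∈ K, t ∈ Φ s' ∧ s' ++ [σ] ∈ LG ∧ s' ++ [σ] ∉ K})
    (SCA : List α → Set α)
    (hSCA : ∀ t : List α,
      SCA t = if t ∈ ⋃ s ∈ K, Φ s then (η t)ᶜ ∪ Euc else Euc) :
    {s : List α | LargeLang LG Euc Eca Φ SCA s} = K := by
  obtain rfl : η = illegalEvents LG K Φ := funext hη
  obtain rfl : SCA = caSupervisor LG K Euc Φ := funext hSCA
  obtain ⟨w, hw⟩ := hKne
  exact (LargeLang.subset_of_forall_enabled (hK w hw [] w.nil_prefix) hctrl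
    (caSupervisor_safe fun s hs σ hσ => hctrl s hs σ (.inl hσ))).antisymm
    (LargeLang.superset_of_forall_enabled hKL hK (caSupervisor_enables hK hobs))

open Classical in
/-- Sufficiency: if `K` is nonempty, prefix-closed, CA-controllable and
CA-observable, then the state-estimate-based supervisor `S_CA` achieves
`L_a(S_CA^a/G) = K`. Here `η t` is the set of events that could lead out of `K` from
some string consistent with the observation `t`, and
`S_CA t = (Σ \ η t) ∪ Euc` for `t ∈ Φ^π(K)`, `S_CA t = Euc` otherwise. -/
theorem stmt_17 {α : Type*} (LG K : Set (List α)) (Euc Eca : Set α)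
    (Φ : List α → Set (List α))
    (hKL : K ⊆ LG) (hKne : K.Nonempty)
    (hK : ∀ s ∈ K, ∀ s' : List α, s' <+: s → s' ∈ K)
    (hLG : ∀ s ∈ LG, ∀ s' : List α, s' <+: s → s' ∈ LG)
    (hΦne : ∀ s ∈ LG, (Φ s).Nonempty)
    (hctrl : ∀ s ∈ K, ∀ σ ∈ Euc ∪ Eca, s ++ [σ] ∈ LG → s ++ [σ] ∈ K)
    (hobs : ∀ s : List α, ∀ σ : α, s ++ [σ] ∈ K →
      ∃ t ∈ Φ s, ∀ s' : List α, t ∈ Φ s' →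
        s' ∈ K → s' ++ [σ] ∈ LG → s' ++ [σ] ∈ K)
    (η : List α → Set α)
    (hη : ∀ t : List α,
      η t = {σ : α | ∃ s' ∈ K, t ∈ Φ s' ∧ s' ++ [σ] ∈ LG ∧ s' ++ [σ] ∉ K})
    (SCA : List α → Set α)
    (hSCA : ∀ t : List α,
      SCA t = if t ∈ ⋃ s ∈ K, Φ s then (η t)ᶜ ∪ Euc else Euc) :
    {s : List α | LargeLang LG Euc Eca Φ SCA s} = K :=
  stmt_17_general LG K Euc Eca Φ hKL hKne hK hctrl hobs η hη SCA hSCA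
end
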